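/- The probability measure α on the f-system 𝓐^uni is coherent: for every n ∈ ℕ, all real numbers α₁,…,αₙ and all A₁,…,Aₙ ∈ 𝓐^uni, sup_{x∈[0,∞)} Σ_{i=1}^n αᵢ(1_{A_i}(x) − α(A_i)) ≥ 0. -/

import Mathlib

/-!
If `log A` has uniform density, then `σ_{log A}(D, 1)` is squeezed between the infimum and the
supremum in `L(log A) = U(log A)`, so `log A` has natural density `α(A)`. Natural density is
coherent: on `[0, T]` the average of `∑ aᵢ (1_{Bᵢ} - λ(Bᵢ))` is `∑ aᵢ (ρ_{Bᵢ}(T) - λ(Bᵢ)) → 0`,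
so the supremum of the integrand cannot be negative. Coherence is pulled back along `exp`, since
`u ∈ log A ↔ exp u ∈ A` for `u ≥ 0` and `exp` maps `[0,∞)` into itself.
-/

open MeasureTheory Filter Set Topology

noncomputable section

namespace UPN

/-- The half line `[0,∞)` viewed as a subset of `ℝ`. -/
def Ray : Set ℝ := Set.Ici 0

/-- The indicator function `1_A`. -/
def ind (A : Set ℝ) : ℝ → ℝ := Set.indicator A fun _ => (1 : ℝ)

/-- The collection `𝓜` of countable unions `⋃ᵢ [a_{2i-1}, a_{2i})` for a
nondecreasing nonnegative sequence `a`. -/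
def Mcal : Set (Set ℝ) :=
  {A | ∃ a : ℕ → ℝ, 0 ≤ a 0 ∧ Monotone a ∧
        A = ⋃ i : ℕ, Set.Ico (a (2 * i)) (a (2 * i + 1))}

/-- The density function `ρ_A`: `ρ_A(0) = 0` and `ρ_A(x) = (1/x)∫₀ˣ 1_A(y) dy`. -/
def rho (A : Set ℝ) (x : ℝ) : ℝ :=
  if x = 0 then 0 else (1 / x) * ∫ y in (0:ℝ)..x, ind A y

/-- The collection `𝓒` of elements of `𝓜` having natural density. -/
def Ccal : Set (Set ℝ) :=
  {A | A ∈ Mcal ∧ ∃ l : ℝ, Tendsto (rho A) atTop (𝓝 l)}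

/-- The natural density `λ(A) = lim_{x→∞} ρ_A(x)`. -/
def lam (A : Set ℝ) : ℝ := limUnder atTop (rho A)

/-- `S_A(x) = m(A ∩ [0,x))`. -/
def Sfn (A : Set ℝ) (x : ℝ) : ℝ := (volume (A ∩ Set.Ico 0 x)).toReal

/-- The thinning operation `A ∘ B = {x : x ∈ A ∧ S_A(x) ∈ B}`. -/
def thin (A B : Set ℝ) : Set ℝ := {x | x ∈ A ∧ Sfn A x ∈ B}

/-- An f-system on `[0,∞)`: a nonempty collection of subsets of `[0,∞)` closed
under complements (in `[0,∞)`) and finite disjoint unions. -/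
structure IsFSystem (F : Set (Set ℝ)) : Prop where
  nonempty : F.Nonempty
  subset_ray : ∀ A ∈ F, A ⊆ Ray
  compl_mem : ∀ A ∈ F, Ray \ A ∈ F
  union_mem : ∀ A ∈ F, ∀ B ∈ F, A ∩ B = ∅ → A ∪ B ∈ F

/-- A probability pair `(F, μ)` on `[0,∞)`: `F` is an f-system and `μ` is a finitely
additive probability measure on `F` with values in `[0,1]` and `μ([0,∞)) = 1`. -/
structure IsProbPair (F : Set (Set ℝ)) (μ : Set ℝ → ℝ) : Prop where
  fsystem : IsFSystem F
  nonneg : ∀ A ∈ F, 0 ≤ μ A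
  le_one : ∀ A ∈ F, μ A ≤ 1
  ray_eq_one : μ Ray = 1
  additive : ∀ A ∈ F, ∀ B ∈ F, A ∩ B = ∅ → μ (A ∪ B) = μ A + μ B

/-- A weakly thinnable pair (WTP). -/
structure IsWTP (F : Set (Set ℝ)) (μ : Set ℝ → ℝ) : Prop where
  pair : IsProbPair F μ
  Ccal_subset : Ccal ⊆ F
  subset_Mcal : F ⊆ Mcal
  P1 : ∀ C ∈ Ccal, ∀ A ∈ F, thin C A ∈ F ∧ μ (thin C A) = μ C * μ A
  P2 : ∀ A ∈ F, ∀ B ∈ F, (∀ x : ℝ, Sfn B x ≤ Sfn A x) → μ B ≤ μ A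
  P3 : ∀ c : ℝ, 0 ≤ c → μ (Set.Ici c) = 1

/-- Coherence of a probability measure `μ` on an f-system `F` on `[0,∞)`. -/
def Coherent (F : Set (Set ℝ)) (μ : Set ℝ → ℝ) : Prop :=
  ∀ (n : ℕ) (a : Fin n → ℝ) (A : Fin n → Set ℝ), (∀ i, A i ∈ F) →
    0 ≤ ⨆ x : Ray, ∑ i, a i * (ind (A i) ↑x - μ (A i))

/-- `σ_A(D,x) = (1/D) ∫_x^{x+D} 1_A(y) dy`. -/
def sigmaFn (A : Set ℝ) (D x : ℝ) : ℝ := (1 / D) * ∫ y in x..(x + D), ind A y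

/-- `U(A) = limsup_{D→∞} sup_{x>0} σ_A(D,x)`. -/
def Ufn (A : Set ℝ) : ℝ :=
  limsup (fun D => ⨆ x : Set.Ioi (0:ℝ), sigmaFn A D ↑x) atTop

/-- `L(A) = liminf_{D→∞} inf_{x>0} σ_A(D,x)`. -/
def Lfn (A : Set ℝ) : ℝ :=
  liminf (fun D => ⨅ x : Set.Ioi (0:ℝ), sigmaFn A D ↑x) atTop

/-- `𝓦^uni = {A ∈ 𝓜 : L(A) = U(A)}`. -/
def Wuni : Set (Set ℝ) := {A | A ∈ Mcal ∧ Lfn A = Ufn A}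

/-- `log(A) = {log a : a ∈ A ∩ [1,∞)}`. -/
def logSet (A : Set ℝ) : Set ℝ := Real.log '' (A ∩ Set.Ici 1)

/-- `𝓐^uni = {A ∈ 𝓜 : log(A) ∈ 𝓦^uni}`. -/
def Auni : Set (Set ℝ) := {A | A ∈ Mcal ∧ logSet A ∈ Wuni}

/-- `α(A) = λ(log(A))`. -/
def alphaFn (A : Set ℝ) : ℝ := lam (logSet A)

/-- `ξ_A(D,x) = (1/log D) ∫_x^{Dx} ρ_A(y)/y dy`. -/
def xi (A : Set ℝ) (D x : ℝ) : ℝ :=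
  (1 / Real.log D) * ∫ y in x..(D * x), rho A y / y

/-- Membership in `𝓟`: `s` is a sequence in `(1,∞)` tending to `∞` and `f` is a
sequence in `(1,∞)`. -/
def memP (s f : ℕ → ℝ) : Prop :=
  (∀ n, 1 < s n) ∧ Tendsto s atTop atTop ∧ ∀ n, 1 < f n

/-- `𝓐^{s,f} = {A ∈ 𝓜 : lim_n ξ_A(s_n,f_n) exists}`. -/
def Asf (s f : ℕ → ℝ) : Set (Set ℝ) :=
  {A | A ∈ Mcal ∧ ∃ l : ℝ, Tendsto (fun n => xi A (s n) (f n)) atTop (𝓝 l)}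

/-- `α^{s,f}(A) = lim_n ξ_A(s_n,f_n)`. -/
def alphasf (s f : ℕ → ℝ) (A : Set ℝ) : ℝ :=
  limUnder atTop fun n => xi A (s n) (f n)

/-- `τ_A(C,j)`; here `j : ℕ` starting from `0` corresponds to the interval
`[C^j, C^{j+1})`, i.e. to the paper's `τ_A(C, j+1)`. -/
def tau (A : Set ℝ) (C : ℝ) (j : ℕ) : ℝ :=
  (1 / (C ^ j * (C - 1))) * ∫ y in (C ^ j : ℝ)..(C ^ (j + 1)), ind A y

/-- `U^*(C,A) = limsup_{n→∞} sup_k (1/n) Σ_{j=k}^{k+n-1} τ_A(C,j)`. -/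
def Ustar (C : ℝ) (A : Set ℝ) : ℝ :=
  limsup (fun n : ℕ => ⨆ k : ℕ, (1 / (n : ℝ)) * ∑ i ∈ Finset.range n, tau A C (k + i)) atTop

lemma ind_nonneg (A : Set ℝ) (x : ℝ) : 0 ≤ ind A x :=
  Set.indicator_nonneg (fun _ _ => zero_le_one) x

lemma norm_ind_le_one (A : Set ℝ) (x : ℝ) : ‖ind A x‖ ≤ 1 := by
  by_cases h : x ∈ A <;> simp [ind, h]

lemma intervalIntegrable_ind {A : Set ℝ} (hA : MeasurableSet A) (a b : ℝ) :
    IntervalIntegrable (ind A) volume a b :=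
  (intervalIntegrable_const (c := (1 : ℝ))).mono_fun'
    (measurable_const.indicator hA).aestronglyMeasurable
    (Eventually.of_forall (norm_ind_le_one A))

lemma measurableSet_of_mem_Mcal {A : Set ℝ} (hA : A ∈ Mcal) : MeasurableSet A := by
  obtain ⟨a, -, -, rfl⟩ := hA
  exact MeasurableSet.iUnion fun i => measurableSet_Ico

lemma sigmaFn_nonneg (A : Set ℝ) {D : ℝ} (hD : 0 < D) (x : ℝ) : 0 ≤ sigmaFn A D x :=
  mul_nonneg (by positivity)
    (intervalIntegral.integral_nonneg (by linarith) fun y _ => ind_nonneg A y)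

lemma sigmaFn_le_one (A : Set ℝ) {D : ℝ} (hD : 0 < D) (x : ℝ) : sigmaFn A D x ≤ 1 := by
  have h := intervalIntegral.norm_integral_le_of_norm_le_const
    (a := x) (b := x + D) fun y _ => norm_ind_le_one A y
  rw [add_sub_cancel_left, abs_of_pos hD, one_mul] at h
  rw [sigmaFn, one_div, inv_mul_le_iff₀ hD, mul_one]
  exact (le_abs_self _).trans h

lemma tendsto_of_liminf_eq_limsup_of_le {ι : Type*} {l : Filter ι} [l.NeBot] {f g h : ι → ℝ}
    {m M : ℝ} (hfg : f ≤ᶠ[l] g) (hgh : g ≤ᶠ[l] h) (hf : ∀ᶠ i in l, m ≤ f i)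
    (hh : ∀ᶠ i in l, h i ≤ M) (heq : liminf f l = limsup h l) :
    Tendsto g l (𝓝 (limsup h l)) := by
  have hg_ge : IsBoundedUnder (· ≥ ·) l g :=
    isBoundedUnder_of_eventually_ge (hf.mp (hfg.mono fun _ h1 h2 => h2.trans h1))
  have hg_le : IsBoundedUnder (· ≤ ·) l g :=
    isBoundedUnder_of_eventually_le (hh.mp (hgh.mono fun _ h1 h2 => h1.trans h2))
  refine tendsto_of_le_liminf_of_limsup_le ?_ ?_ hg_le hg_ge
  · exact heq ▸ liminf_le_liminf hfg (isBoundedUnder_of_eventually_ge hf)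
      hg_le.isCoboundedUnder_ge
  · exact limsup_le_limsup hgh hg_ge.isCoboundedUnder_le (isBoundedUnder_of_eventually_le hh)

lemma tendsto_sigmaFn_of_Lfn_eq_Ufn {A : Set ℝ} (hA : Lfn A = Ufn A) {x : ℝ} (hx : 0 < x) :
    Tendsto (fun D => sigmaFn A D x) atTop (𝓝 (Ufn A)) := by
  have hbdd : ∀ D, 0 < D → BddAbove (range fun y : Ioi (0 : ℝ) => sigmaFn A D y) ∧
      BddBelow (range fun y : Ioi (0 : ℝ) => sigmaFn A D y) := fun D hD =>
    ⟨⟨1, forall_mem_range.2 fun y => sigmaFn_le_one A hD y⟩,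
      ⟨0, forall_mem_range.2 fun y => sigmaFn_nonneg A hD y⟩⟩
  have hpos : ∀ᶠ D : ℝ in atTop, 0 < D := eventually_gt_atTop 0
  refine tendsto_of_liminf_eq_limsup_of_le (m := 0) (M := 1) ?_ ?_ ?_ ?_ hA
  · exact hpos.mono fun D hD => ciInf_le (hbdd D hD).2 (⟨x, hx⟩ : Ioi (0 : ℝ))
  · exact hpos.mono fun D hD => le_ciSup (hbdd D hD).1 (⟨x, hx⟩ : Ioi (0 : ℝ))
  · exact hpos.mono fun D hD => le_ciInf fun y => sigmaFn_nonneg A hD y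
  · exact hpos.mono fun D hD => ciSup_le fun y => sigmaFn_le_one A hD y

lemma tendsto_rho_of_tendsto_sigmaFn {A : Set ℝ} (hA : MeasurableSet A) {l : ℝ}
    (h : Tendsto (fun D => sigmaFn A D 1) atTop (𝓝 l)) : Tendsto (rho A) atTop (𝓝 l) := by
  set c := ∫ y in (0 : ℝ)..1, ind A y
  have hrho : ∀ᶠ x in atTop, (1 / x) * c + ((x - 1) / x) * sigmaFn A (x - 1) 1 = rho A x := by
    filter_upwards [eventually_gt_atTop 1] with x hx
    rw [rho, if_neg (by linarith), sigmaFn, add_sub_cancel,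
      ← intervalIntegral.integral_add_adjacent_intervals
        (intervalIntegrable_ind hA 0 1) (intervalIntegrable_ind hA 1 x)]
    field_simp [sub_ne_zero.2 hx.ne']
    rfl
  have hc : Tendsto (fun x : ℝ => (1 / x) * c) atTop (𝓝 0) := by
    simpa [one_div] using tendsto_inv_atTop_zero.mul_const c
  have hratio : Tendsto (fun x : ℝ => (x - 1) / x) atTop (𝓝 1) := by
    have := tendsto_const_nhds (x := (1 : ℝ)).sub (tendsto_inv_atTop_zero (𝕜 := ℝ))
    rw [sub_zero] at this
    refine this.congr' ?_
    filter_upwards [eventually_ne_atTop 0] with x hx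
    field_simp
  have hshift : Tendsto (fun x : ℝ => sigmaFn A (x - 1) 1) atTop (𝓝 l) :=
    h.comp (tendsto_atTop_add_const_right atTop (-1) tendsto_id)
  simpa using (hc.add (hratio.mul hshift)).congr' hrho

lemma Wuni_subset_Ccal : Wuni ⊆ Ccal := fun A ⟨hM, hLU⟩ =>
  ⟨hM, Ufn A, tendsto_rho_of_tendsto_sigmaFn (measurableSet_of_mem_Mcal hM)
    (tendsto_sigmaFn_of_Lfn_eq_Ufn hLU one_pos)⟩

-- An unbounded supremum in `ℝ` is the junk value `sSup ∅ = 0`.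
lemma iSup_nonneg_of_upperBounds_nonneg {ι : Sort*} (f : ι → ℝ)
    (h : ∀ S ∈ upperBounds (range f), 0 ≤ S) : 0 ≤ ⨆ i, f i := by
  by_cases hf : BddAbove (range f)
  · exact h _ (forall_mem_range.2 (le_ciSup hf))
  · rw [ciSup_of_not_bddAbove hf, Real.sSup_empty]

lemma average_le_of_le {f : ℝ → ℝ} {S T : ℝ} (hT : 0 < T)
    (hf : IntervalIntegrable f volume 0 T) (h : ∀ x ∈ Icc 0 T, f x ≤ S) :
    (1 / T) * ∫ x in (0 : ℝ)..T, f x ≤ S := by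
  calc (1 / T) * ∫ x in (0 : ℝ)..T, f x
      ≤ (1 / T) * ∫ _ in (0 : ℝ)..T, S := by
        gcongr
        exact intervalIntegral.integral_mono_on hT.le hf intervalIntegrable_const h
    _ = S := by
        rw [intervalIntegral.integral_const, smul_eq_mul, sub_zero]
        field_simp

lemma sum_rho_sub_le_of_le {n : ℕ} {A : Fin n → Set ℝ} (hA : ∀ i, MeasurableSet (A i))
    {a l : Fin n → ℝ} {S T : ℝ} (hT : 0 < T)
    (h : ∀ x ∈ Icc 0 T, ∑ i, a i * (ind (A i) x - l i) ≤ S) :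
    ∑ i, a i * (rho (A i) T - l i) ≤ S := by
  have hint : ∀ i, IntervalIntegrable (fun x => a i * (ind (A i) x - l i)) volume 0 T :=
    fun i => ((intervalIntegrable_ind (hA i) 0 T).sub intervalIntegrable_const).const_mul _
  calc ∑ i, a i * (rho (A i) T - l i)
      = (1 / T) * ∫ x in (0 : ℝ)..T, ∑ i, a i * (ind (A i) x - l i) := by
        rw [intervalIntegral.integral_finsetSum fun i _ => hint i, Finset.mul_sum]
        refine Finset.sum_congr rfl fun i _ => ?_
        rw [intervalIntegral.integral_const_mul, intervalIntegral.integral_sub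
          (intervalIntegrable_ind (hA i) 0 T) intervalIntegrable_const,
          intervalIntegral.integral_const, rho, if_neg hT.ne']
        field_simp
        ring
    _ ≤ S := average_le_of_le hT
        (by simpa only [Finset.sum_fn] using IntervalIntegrable.sum Finset.univ fun i _ => hint i) h

lemma coherent_Ccal_lam : Coherent Ccal lam := by
  intro n a A hA
  refine iSup_nonneg_of_upperBounds_nonneg _ fun S hS => ?_
  have hle : ∀ x ∈ Ray, ∑ i, a i * (ind (A i) x - lam (A i)) ≤ S :=
    fun x hx => hS ⟨⟨x, hx⟩, rfl⟩
  have hmeas : ∀ i, MeasurableSet (A i) := fun i => measurableSet_of_mem_Mcal (hA i).1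
  have hrho : ∀ i, Tendsto (rho (A i)) atTop (𝓝 (lam (A i))) :=
    fun i => tendsto_nhds_limUnder (hA i).2
  have hlim : Tendsto (fun T => ∑ i, a i * (rho (A i) T - lam (A i))) atTop (𝓝 0) := by
    simpa using tendsto_finsetSum Finset.univ fun i _ =>
      ((hrho i).sub_const (lam (A i))).const_mul (a i)
  refine le_of_tendsto hlim ?_
  filter_upwards [eventually_gt_atTop 0] with T hT
  exact sum_rho_sub_le_of_le hmeas hT fun x hx => hle x hx.1

lemma Coherent.of_pullback {F G : Set (Set ℝ)} {μ : Set ℝ → ℝ} (h : Coherent F μ)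
    (T : Set ℝ → Set ℝ) (φ : ℝ → ℝ) (hφ : MapsTo φ Ray Ray) (hT : ∀ A ∈ G, T A ∈ F)
    (hmem : ∀ A ∈ G, ∀ x ∈ Ray, x ∈ T A ↔ φ x ∈ A) : Coherent G (fun A => μ (T A)) := by
  intro n a A hA
  refine iSup_nonneg_of_upperBounds_nonneg _ fun S hS => ?_
  have : Nonempty Ray := ⟨⟨0, le_refl (0 : ℝ)⟩⟩
  refine (h n a (T ∘ A) fun i => hT _ (hA i)).trans (ciSup_le fun x => ?_)
  have hind : ∀ i, ind (T (A i)) x = ind (A i) (φ x) := fun i =>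
    indicator_const_eq_indicator_const (hmem _ (hA i) x x.2)
  simpa only [Function.comp_apply, hind] using hS ⟨⟨φ x, hφ x.2⟩, rfl⟩

lemma mem_logSet_iff {A : Set ℝ} {u : ℝ} (hu : 0 ≤ u) : u ∈ logSet A ↔ Real.exp u ∈ A := by
  constructor
  · rintro ⟨y, ⟨hyA, hy1⟩, rfl⟩
    rwa [Real.exp_log (one_pos.trans_le hy1)]
  · exact fun h => ⟨Real.exp u, ⟨h, Real.one_le_exp hu⟩, Real.log_exp u⟩

/-- The probability measure `α` on the f-system `𝓐^uni` is coherent. -/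
theorem stmt5 : Coherent Auni alphaFn :=
  coherent_Ccal_lam.of_pullback logSet Real.exp (fun x _ => (Real.exp_pos x).le)
    (fun _ hA => Wuni_subset_Ccal hA.2) fun _ _ _ hx => mem_logSet_iff hx

end UPN
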